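/- arXiv:1709.08510 — 2 statements merged into one kernel-verified Lean document; each statement's English description precedes it below -/
import Mathlib

section
/- An LTL formula φ is satisfiable by some non-empty team under synchronous team semantics if and only if φ is satisfiable by some single trace under classical LTL semantics. -/
/-- A trace assigns to each time point a set of atomic propositions. -/
abbrev Trace (AP : Type) := ℕ → Set AP
/-- A team is a set of traces. -/
abbrev Team (AP : Type) := Set (Trace AP)

/-- The suffix `t[i,∞)` of a trace. -/
def Trace.shift {AP : Type} (t : Trace AP) (i : ℕ) : Trace AP := fun j => t (i + j)

/-- The synchronous suffix `T[i,∞)` of a team. -/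
def Team.shift {AP : Type} (T : Team AP) (i : ℕ) : Team AP := (fun t => t.shift i) '' T

/-- Asynchronous shift: each trace `t` is shifted by its own amount `f t`. -/
def Team.ashift {AP : Type} (T : Team AP) (f : Trace AP → ℕ) : Team AP :=
  (fun t => t.shift (f t)) '' T

/-- LTL formulas in negation normal form. -/
inductive LTL (AP : Type) : Type where
  | atom : AP → LTL AP
  | natom : AP → LTL AP
  | conj : LTL AP → LTL AP → LTL AP
  | disj : LTL AP → LTL AP → LTL AP
  | next : LTL AP → LTL AP
  | fut : LTL AP → LTL AP
  | glob : LTL AP → LTL AP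
  | untl : LTL AP → LTL AP → LTL AP
  | rel : LTL AP → LTL AP → LTL AP

/-- Classical LTL semantics on a single trace. -/
def ltlSat {AP : Type} : LTL AP → Trace AP → Prop
  | .atom p, t => p ∈ t 0
  | .natom p, t => p ∉ t 0
  | .conj φ ψ, t => ltlSat φ t ∧ ltlSat ψ t
  | .disj φ ψ, t => ltlSat φ t ∨ ltlSat ψ t
  | .next φ, t => ltlSat φ (t.shift 1)
  | .fut φ, t => ∃ k, ltlSat φ (t.shift k)
  | .glob φ, t => ∀ k, ltlSat φ (t.shift k)
  | .untl φ ψ, t => ∃ k, ltlSat ψ (t.shift k) ∧ ∀ k' < k, ltlSat φ (t.shift k')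
  | .rel φ ψ, t => ∀ k, ltlSat ψ (t.shift k) ∨ ∃ k' < k, ltlSat φ (t.shift k')

/-- Synchronous team semantics for LTL. -/
def syncSat {AP : Type} : LTL AP → Team AP → Prop
  | .atom p, T => ∀ t ∈ T, p ∈ t 0
  | .natom p, T => ∀ t ∈ T, p ∉ t 0
  | .conj φ ψ, T => syncSat φ T ∧ syncSat ψ T
  | .disj φ ψ, T => ∃ T₁ T₂, T₁ ∪ T₂ = T ∧ syncSat φ T₁ ∧ syncSat ψ T₂
  | .next φ, T => syncSat φ (T.shift 1)
  | .fut φ, T => ∃ k, syncSat φ (T.shift k)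
  | .glob φ, T => ∀ k, syncSat φ (T.shift k)
  | .untl φ ψ, T => ∃ k, syncSat ψ (T.shift k) ∧ ∀ k' < k, syncSat φ (T.shift k')
  | .rel φ ψ, T => ∀ k, syncSat ψ (T.shift k) ∨ ∃ k' < k, syncSat φ (T.shift k')

/-- Asynchronous team semantics for LTL: temporal operators use an
independent time shift `f t` for each trace `t` of the team. -/
def asyncSat {AP : Type} : LTL AP → Team AP → Prop
  | .atom p, T => ∀ t ∈ T, p ∈ t 0
  | .natom p, T => ∀ t ∈ T, p ∉ t 0
  | .conj φ ψ, T => asyncSat φ T ∧ asyncSat ψ T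
  | .disj φ ψ, T => ∃ T₁ T₂, T₁ ∪ T₂ = T ∧ asyncSat φ T₁ ∧ asyncSat ψ T₂
  | .next φ, T => asyncSat φ (T.shift 1)
  | .fut φ, T => ∃ f : Trace AP → ℕ, asyncSat φ (T.ashift f)
  | .glob φ, T => ∀ f : Trace AP → ℕ, asyncSat φ (T.ashift f)
  | .untl φ ψ, T => ∃ f : Trace AP → ℕ, asyncSat ψ (T.ashift f) ∧
      ∀ g : Trace AP → ℕ, (∀ t ∈ T, g t < f t) → asyncSat φ (T.ashift g)
  | .rel φ ψ, T => ∀ f : Trace AP → ℕ, asyncSat ψ (T.ashift f) ∨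
      ∃ g : Trace AP → ℕ, (∀ t ∈ T, g t < f t) ∧ asyncSat φ (T.ashift g)

lemma Team.shift_mono {AP : Type} {S T : Team AP} (h : S ⊆ T) (i : ℕ) :
    S.shift i ⊆ T.shift i := Set.image_mono h

lemma Team.shift_empty {AP : Type} (i : ℕ) : (∅ : Team AP).shift i = ∅ :=
  Set.image_empty _

lemma Team.shift_singleton {AP : Type} (t : Trace AP) (i : ℕ) :
    ({t} : Team AP).shift i = {t.shift i} := Set.image_singleton

lemma syncSat_mono {AP : Type} (φ : LTL AP) :
    ∀ {T S : Team AP}, syncSat φ T → S ⊆ T → syncSat φ S := by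
  induction φ with
  | atom p => intro T S h hs t ht; exact h t (hs ht)
  | natom p => intro T S h hs t ht; exact h t (hs ht)
  | conj φ ψ ih1 ih2 => intro T S h hs; exact ⟨ih1 h.1 hs, ih2 h.2 hs⟩
  | disj φ ψ ih1 ih2 =>
    intro T S h hs
    obtain ⟨T₁, T₂, hu, h1, h2⟩ := h
    refine ⟨S ∩ T₁, S ∩ T₂, ?_, ih1 h1 Set.inter_subset_right,
      ih2 h2 Set.inter_subset_right⟩
    rw [← Set.inter_union_distrib_left, hu]
    exact Set.inter_eq_left.mpr hs
  | next φ ih => intro T S h hs; exact ih h (Team.shift_mono hs 1)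
  | fut φ ih =>
    intro T S h hs; obtain ⟨k, hk⟩ := h; exact ⟨k, ih hk (Team.shift_mono hs k)⟩
  | glob φ ih => intro T S h hs k; exact ih (h k) (Team.shift_mono hs k)
  | untl φ ψ ih1 ih2 =>
    intro T S h hs
    obtain ⟨k, hk, hk'⟩ := h
    exact ⟨k, ih2 hk (Team.shift_mono hs k),
      fun k' hk'' => ih1 (hk' k' hk'') (Team.shift_mono hs k')⟩
  | rel φ ψ ih1 ih2 =>
    intro T S h hs k
    rcases h k with h | ⟨k', hk', h⟩
    · exact Or.inl (ih2 h (Team.shift_mono hs k))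
    · exact Or.inr ⟨k', hk', ih1 h (Team.shift_mono hs k')⟩

lemma syncSat_empty {AP : Type} (φ : LTL AP) : syncSat φ (∅ : Team AP) := by
  induction φ with
  | atom p => intro t ht; exact absurd ht (Set.notMem_empty t)
  | natom p => intro t ht; exact absurd ht (Set.notMem_empty t)
  | conj φ ψ ih1 ih2 => exact ⟨ih1, ih2⟩
  | disj φ ψ ih1 ih2 => exact ⟨∅, ∅, by simp, ih1, ih2⟩
  | next φ ih => rw [syncSat, Team.shift_empty]; exact ih
  | fut φ ih => exact ⟨0, by rw [Team.shift_empty]; exact ih⟩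
  | glob φ ih => intro k; rw [Team.shift_empty]; exact ih
  | untl φ ψ ih1 ih2 =>
    exact ⟨0, by rw [Team.shift_empty]; exact ih2, fun k' h => absurd h (by omega)⟩
  | rel φ ψ ih1 ih2 => intro k; exact Or.inl (by rw [Team.shift_empty]; exact ih2)

lemma syncSat_singleton {AP : Type} (φ : LTL AP) :
    ∀ t : Trace AP, syncSat φ ({t} : Team AP) ↔ ltlSat φ t := by
  induction φ with
  | atom p => intro t; simp [syncSat, ltlSat]
  | natom p => intro t; simp [syncSat, ltlSat]
  | conj φ ψ ih1 ih2 => intro t; simp [syncSat, ltlSat, ih1, ih2]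
  | disj φ ψ ih1 ih2 =>
    intro t
    constructor
    · rintro ⟨T₁, T₂, hu, h1, h2⟩
      have ht : t ∈ T₁ ∪ T₂ := hu ▸ rfl
      rcases ht with ht | ht
      · exact Or.inl ((ih1 t).mp (syncSat_mono φ h1 (Set.singleton_subset_iff.mpr ht)))
      · exact Or.inr ((ih2 t).mp (syncSat_mono ψ h2 (Set.singleton_subset_iff.mpr ht)))
    · rintro (h | h)
      · exact ⟨{t}, ∅, by simp, (ih1 t).mpr h, syncSat_empty ψ⟩
      · exact ⟨∅, {t}, by simp, syncSat_empty φ, (ih2 t).mpr h⟩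
  | next φ ih =>
    intro t; rw [syncSat, Team.shift_singleton]; exact ih _
  | fut φ ih =>
    intro t
    simp only [syncSat, ltlSat, Team.shift_singleton, ih]
  | glob φ ih =>
    intro t
    simp only [syncSat, ltlSat, Team.shift_singleton, ih]
  | untl φ ψ ih1 ih2 =>
    intro t
    simp only [syncSat, ltlSat, Team.shift_singleton, ih1, ih2]
  | rel φ ψ ih1 ih2 =>
    intro t
    simp only [syncSat, ltlSat, Team.shift_singleton, ih1, ih2]

/-- satisfiability by a non-empty team under synchronous team
semantics coincides with classical LTL satisfiability. -/
theorem sync_sat_iff_classical_sat {AP : Type} (φ : LTL AP) :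
    (∃ T : Team AP, T.Nonempty ∧ syncSat φ T) ↔ (∃ t : Trace AP, ltlSat φ t) := by
  constructor
  · rintro ⟨T, ⟨t, ht⟩, hT⟩
    exact ⟨t, (syncSat_singleton φ t).mp
      (syncSat_mono φ hT (Set.singleton_subset_iff.mpr ht))⟩
  · rintro ⟨t, ht⟩
    exact ⟨{t}, Set.singleton_nonempty t, (syncSat_singleton φ t).mpr ht⟩
end

section
/- No LTL formula under synchronous (or asynchronous) team semantics is equivalent to the HyperLTL sentence ∃π. p_π: there is no LTL formula φ such that for all teams T, T ⊨ˢ φ iff some trace in T has p at position 0 (and likewise for ⊨ᵃ). -/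
/-! Synchronous team semantics is downward closed, so from `{∅^ω, {p}^ω} ⊨ φ`, which must hold
since `{p}^ω` has `p` at time `0`, we would get `{∅^ω} ⊨ φ`, although no trace of `{∅^ω}` has `p`.
For the asynchronous semantics the same conclusion comes from a trace that never changes: it is
fixed by every shift, so by induction on the formula whatever a team satisfies is also satisfied
by the singleton team of such a member, and `∅^ω` is one. -/

namespace Trace

variable {AP : Type}

def ShiftInvariant (u : Trace AP) : Prop := ∀ k, u.shift k = u

theorem shiftInvariant_const (a : Set AP) : ShiftInvariant (fun _ => a : Trace AP) :=
  fun _ => rfl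

theorem shift_zero (t : Trace AP) : t.shift 0 = t := by
  funext j
  simp [shift]

end Trace

namespace Team

variable {AP : Type} {u : Trace AP} {S T : Team AP}

theorem shift_mono_s18 (h : S ⊆ T) (k : ℕ) : S.shift k ⊆ T.shift k :=
  Set.image_mono h

@[simp]
theorem ashift_empty (f : Trace AP → ℕ) : (∅ : Team AP).ashift f = ∅ :=
  Set.image_empty _

theorem ashift_zero (S : Team AP) : S.ashift (fun _ => 0) = S := by
  simp [ashift, Trace.shift_zero]

theorem mem_ashift_of_mem (hu : u.ShiftInvariant) (h : u ∈ S) (f : Trace AP → ℕ) :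
    u ∈ S.ashift f :=
  ⟨u, h, hu (f u)⟩

theorem shift_singleton_s18 (hu : u.ShiftInvariant) (k : ℕ) : ({u} : Team AP).shift k = {u} := by
  simp [shift, hu k]

theorem ashift_singleton (hu : u.ShiftInvariant) (f : Trace AP → ℕ) :
    ({u} : Team AP).ashift f = {u} := by
  simp [ashift, hu (f u)]

end Team

section Semantics

variable {AP : Type}

open Team

theorem syncSat_of_subset (φ : LTL AP) :
    ∀ {S T : Team AP}, S ⊆ T → syncSat φ T → syncSat φ S := by
  induction φ with
  | atom q | natom q => exact fun hST h t ht => h t (hST ht)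
  | conj φ ψ ihφ ihψ => exact fun hST h => ⟨ihφ hST h.1, ihψ hST h.2⟩
  | disj φ ψ ihφ ihψ =>
    rintro S T hST ⟨T₁, T₂, rfl, hφ, hψ⟩
    refine ⟨T₁ ∩ S, T₂ ∩ S, ?_, ihφ Set.inter_subset_left hφ, ihψ Set.inter_subset_left hψ⟩
    rw [← Set.union_inter_distrib_right, Set.inter_eq_self_of_subset_right hST]
  | next φ ih => exact fun hST h => ih (shift_mono_s18 hST 1) h
  | fut φ ih => exact fun hST ⟨k, h⟩ => ⟨k, ih (shift_mono_s18 hST k) h⟩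
  | glob φ ih => exact fun hST h k => ih (shift_mono_s18 hST k) (h k)
  | untl φ ψ ihφ ihψ =>
    exact fun hST ⟨k, hψ, hφ⟩ =>
      ⟨k, ihψ (shift_mono_s18 hST k) hψ, fun k' hk' => ihφ (shift_mono_s18 hST k') (hφ k' hk')⟩
  | rel φ ψ ihφ ihψ =>
    exact fun hST h k => (h k).imp (ihψ (shift_mono_s18 hST k))
      fun ⟨k', hk', hφ⟩ => ⟨k', hk', ihφ (shift_mono_s18 hST k') hφ⟩

theorem asyncSat_empty (φ : LTL AP) : asyncSat φ (∅ : Team AP) := by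
  induction φ with
  | atom q | natom q => exact fun _ h => h.elim
  | conj φ ψ ihφ ihψ => exact ⟨ihφ, ihψ⟩
  | disj φ ψ ihφ ihψ => exact ⟨∅, ∅, Set.union_empty _, ihφ, ihψ⟩
  | next φ ih => simpa [asyncSat, Team.shift] using ih
  | fut φ ih => exact ⟨fun _ => 0, by simpa using ih⟩
  | glob φ ih => exact fun f => by simpa using ih
  | untl φ ψ ihφ ihψ => exact ⟨fun _ => 0, by simpa using ihψ, fun g _ => by simpa using ihφ⟩
  | rel φ ψ ihφ ihψ => exact fun f => Or.inl (by simpa using ihψ)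

theorem asyncSat_singleton_of_mem {u : Trace AP} (hu : u.ShiftInvariant) (φ : LTL AP) :
    ∀ {S : Team AP}, u ∈ S → asyncSat φ S → asyncSat φ {u} := by
  induction φ with
  | atom q | natom q =>
    rintro S hS h t rfl
    exact h t hS
  | conj φ ψ ihφ ihψ => exact fun hS h => ⟨ihφ hS h.1, ihψ hS h.2⟩
  | disj φ ψ ihφ ihψ =>
    rintro S hS ⟨T₁, T₂, rfl, hφ, hψ⟩
    rcases hS with h₁ | h₂
    · exact ⟨{u}, ∅, Set.union_empty _, ihφ h₁ hφ, asyncSat_empty ψ⟩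
    · exact ⟨∅, {u}, Set.empty_union _, asyncSat_empty φ, ihψ h₂ hψ⟩
  | next φ ih =>
    intro S hS h
    show asyncSat φ (({u} : Team AP).shift 1)
    rw [shift_singleton_s18 hu]
    exact ih (⟨u, hS, hu 1⟩ : u ∈ S.shift 1) h
  | fut φ ih =>
    rintro S hS ⟨f, h⟩
    exact ⟨f, by rw [ashift_singleton hu]; exact ih (mem_ashift_of_mem hu hS f) h⟩
  | glob φ ih =>
    intro S hS h f
    rw [ashift_singleton hu]
    exact ih hS (ashift_zero S ▸ h fun _ => 0)
  | untl φ ψ ihφ ihψ =>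
    -- the zero shift leaves no earlier position at which `φ` has to hold
    rintro S hS ⟨f, hψ, -⟩
    refine ⟨fun _ => 0, ?_, fun g hg => absurd (hg u rfl) (Nat.not_lt_zero _)⟩
    rw [ashift_singleton hu]
    exact ihψ (mem_ashift_of_mem hu hS f) hψ
  | rel φ ψ ihφ ihψ =>
    intro S hS h f
    rw [ashift_singleton hu]
    rcases h f with hψ | ⟨g, hg, hφ⟩
    · exact Or.inl (ihψ (mem_ashift_of_mem hu hS f) hψ)
    · refine Or.inr ⟨g, fun t ht => ?_, ?_⟩
      · rw [Set.mem_singleton_iff.mp ht]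
        exact hg u hS
      · rw [ashift_singleton hu]
        exact ihφ (mem_ashift_of_mem hu hS g) hφ

end Semantics

theorem not_forall_iff_exists_of_sat_empty_trace {AP : Type} (p : AP) {sat : Team AP → Prop}
    (h : ∀ {T : Team AP}, (fun _ => ∅) ∈ T → sat T → sat {fun _ => ∅}) :
    ¬ ∀ T : Team AP, sat T ↔ ∃ t ∈ T, p ∈ t 0 := by
  intro hsat
  have hpair : sat {fun _ => ∅, fun _ => {p}} :=
    (hsat _).mpr ⟨fun _ => {p}, Set.mem_insert_of_mem _ rfl, rfl⟩
  obtain ⟨t, rfl, hp⟩ := (hsat _).mp (h (Set.mem_insert _ _) hpair)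
  exact hp

/-- no LTL formula under synchronous or asynchronous team
semantics is equivalent to the HyperLTL sentence `∃π. p_π`. -/
theorem no_ltl_equivalent_to_exists_p {AP : Type} (p : AP) :
    (¬ ∃ φ : LTL AP, ∀ T : Team AP, syncSat φ T ↔ ∃ t ∈ T, p ∈ t 0) ∧
    (¬ ∃ φ : LTL AP, ∀ T : Team AP, asyncSat φ T ↔ ∃ t ∈ T, p ∈ t 0) := by
  refine ⟨fun ⟨φ, hφ⟩ => ?_, fun ⟨φ, hφ⟩ => ?_⟩
  · exact not_forall_iff_exists_of_sat_empty_trace p (sat := syncSat φ)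
      (fun hT => syncSat_of_subset φ (Set.singleton_subset_iff.mpr hT)) hφ
  · exact not_forall_iff_exists_of_sat_empty_trace p
      (asyncSat_singleton_of_mem (Trace.shiftInvariant_const ∅) φ) hφ
end
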